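/- Keystone chain geometry: (1) if κ(i) ≠ i then |x_i − κ°(i)| ≃ δ_{Q_i}; (2) |x_i − κ°(i)| ≲ |x_i − x| for every x ∈ K_p; (3) every cube Q^{i,j} in the chain S(Q_i) satisfies Q^{i,j} ⊆ C·Q_i and |x^{i,j} − κ°(i)| ≲ δ_{Q^{i,j}}; (4) for any keystone cube Q_s and any i with κ(i) = s: δ_{Q_i} ≥ c·δ_{Q_s}, Q_s ⊆ C·Q_i, and for each fixed dyadic sidelength δ, the number of indices i with κ(i) = s and δ_{Q_i} = δ is at most C. -/

import Mathlib

open scoped ENNReal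

noncomputable section

/-- A dyadic cube `∏_i (j_i 2^k, (j_i+1) 2^k]` in `ℝ^n`, recorded by its scale `k` and
its integer coordinates `j`. -/
structure DyadicCube (n : ℕ) where
  k : ℤ
  j : Fin n → ℤ

namespace DyadicCube

/-- The sidelength `2^k` of a dyadic cube. -/
def sidelength {n : ℕ} (Q : DyadicCube n) : ℝ := 2 ^ Q.k

/-- The underlying (half-open) set of a dyadic cube. -/
def toSet {n : ℕ} (Q : DyadicCube n) : Set (Fin n → ℝ) :=
  {x | ∀ i, (Q.j i : ℝ) * 2 ^ Q.k < x i ∧ x i ≤ ((Q.j i : ℝ) + 1) * 2 ^ Q.k}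

/-- The center of a dyadic cube. -/
def center {n : ℕ} (Q : DyadicCube n) : Fin n → ℝ :=
  fun i => ((Q.j i : ℝ) + 1 / 2) * 2 ^ Q.k

/-- The concentric dilate `cQ` of a dyadic cube `Q` (as a closed cube). -/
def dilate {n : ℕ} (Q : DyadicCube n) (c : ℝ) : Set (Fin n → ℝ) :=
  {x | ∀ i, |x i - Q.center i| ≤ c * Q.sidelength / 2}

end DyadicCube

/-- The unit cube `Q° = (0,1]^n` as a dyadic cube. -/
def unitCube (n : ℕ) : DyadicCube n := ⟨0, fun _ => 0⟩

/-- Monotonicity of the `OK` predicate: if `Q, Q'` are dyadic subcubes of `Q°`, `Q'` is OK and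
`3Q ⊆ 3Q'`, then `Q` is OK. -/
def OKmono {n : ℕ} (OK : DyadicCube n → Prop) : Prop :=
  ∀ Q Q' : DyadicCube n, Q.toSet ⊆ (unitCube n).toSet → Q'.toSet ⊆ (unitCube n).toSet →
    OK Q' → Q.dilate 3 ⊆ Q'.dilate 3 → OK Q

/-- A Calderón–Zygmund cube: an OK dyadic subcube of `Q°` such that every dyadic subcube of
`Q°` properly containing it is not OK. -/
def CZ {n : ℕ} (OK : DyadicCube n → Prop) (Q : DyadicCube n) : Prop :=
  Q.toSet ⊆ (unitCube n).toSet ∧ OK Q ∧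
    ∀ Q' : DyadicCube n, Q'.toSet ⊆ (unitCube n).toSet → Q.toSet ⊂ Q'.toSet → ¬ OK Q'

/-- A keystone cube: a CZ cube `Q` such that every CZ cube meeting `100Q` has sidelength
at least that of `Q`. -/
def Keystone {n : ℕ} (OK : DyadicCube n → Prop) (Q : DyadicCube n) : Prop :=
  CZ OK Q ∧ ∀ Q' : DyadicCube n, CZ OK Q' → (Q'.toSet ∩ Q.dilate 100).Nonempty →
    Q.sidelength ≤ Q'.sidelength

/-- The union of all CZ cubes. -/
def KCZ {n : ℕ} (OK : DyadicCube n → Prop) : Set (Fin n → ℝ) :=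
  ⋃ (Q : DyadicCube n) (_ : CZ OK Q), Q.toSet

/-- The set of keystone points `K_p = Q° \ ⋃ {Q : Q CZ}`. -/
def Kp {n : ℕ} (OK : DyadicCube n → Prop) : Set (Fin n → ℝ) :=
  (unitCube n).toSet \ KCZ OK

/-- The hypotheses on a fixed assignment of keystone chains: for every CZ cube `Q`, the chain
`S Q` starts at `Q`, consists of CZ cubes, has consecutive neighbors and geometric sidelength
decay, and either terminates (after `len Q` steps) at a keystone cube whose center is
`endpt Q`, or is infinite with centers converging to the keystone point `endpt Q ∈ K_p`. -/
def ChainHyp {n : ℕ} (OK : DyadicCube n → Prop) (c C : ℝ)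
    (S : DyadicCube n → ℕ → DyadicCube n) (len : DyadicCube n → ℕ∞)
    (endpt : DyadicCube n → (Fin n → ℝ)) : Prop :=
  ∀ Q : DyadicCube n, CZ OK Q →
    S Q 0 = Q ∧
    (∀ k : ℕ, (k : ℕ∞) < len Q → CZ OK (S Q k)) ∧
    (∀ k : ℕ, ((k : ℕ∞) + 1) < len Q →
      (closure (S Q k).toSet ∩ closure (S Q (k + 1)).toSet).Nonempty) ∧
    (∀ ℓ k : ℕ, ℓ ≤ k → (k : ℕ∞) < len Q →
      (S Q k).sidelength ≤ C * c ^ (k - ℓ) * (S Q ℓ).sidelength) ∧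
    ((∃ L : ℕ, 1 ≤ L ∧ len Q = (L : ℕ∞) ∧ Keystone OK (S Q (L - 1)) ∧
        endpt Q = (S Q (L - 1)).center) ∨
     (len Q = ⊤ ∧ endpt Q ∈ Kp OK ∧
        Filter.Tendsto (fun k => (S Q k).center) Filter.atTop (nhds (endpt Q))))

/-!
Along a chain the sidelengths decay geometrically and consecutive cubes touch, so the step from
the `(ℓ + r)`-th center to the next is at most `C c^r δ_ℓ`; summing the geometric series, all
later centers, and with them the endpoint (a limit of centers for an infinite chain), lie within
`C/(1-c) · δ_ℓ` of the `ℓ`-th center. The rest combines this estimate with two facts about dyadic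
cubes: distinct CZ cubes are disjoint, so an endpoint other than the center of `Q` lies outside
`Q`, and only boundedly many cubes of a given sidelength have their centers near a given point.
-/

open Set

lemma mem_Icc_ceil_of_abs_sub_le {z : ℤ} {t R : ℝ} (h : |z - t| ≤ R) :
    z ∈ Finset.Icc ⌈t - R⌉ (⌈t - R⌉ + ⌈2 * R⌉₊) := by
  rw [abs_le] at h
  refine Finset.mem_Icc.2 ⟨Int.ceil_le.2 (by linarith), ?_⟩
  have h₁ := Int.le_ceil (t - R)
  have h₂ := Nat.le_ceil (2 * R)
  have : (z : ℝ) ≤ ⌈t - R⌉ + ⌈2 * R⌉₊ := by linarith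
  exact_mod_cast this

-- Nesting of dyadic intervals, applied with `b = 2 ^ k` and `N * b = 2 ^ k'`.
lemma Ioc_subset_Ioc_of_inter_nonempty {b : ℝ} (hb : 0 < b) {j j' : ℤ} {N : ℕ}
    (h : (Ioc (j * b) ((j + 1) * b) ∩ Ioc (j' * (N * b)) ((j' + 1) * (N * b))).Nonempty) :
    Ioc (j * b) ((j + 1) * b) ⊆ Ioc (j' * (N * b)) ((j' + 1) * (N * b)) := by
  obtain ⟨x, ⟨hx₁, hx₂⟩, hx₃, hx₄⟩ := h
  have hlow : (j' * N : ℝ) ≤ j := by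
    have : (j' * N : ℝ) < j + 1 := lt_of_mul_lt_mul_right (by linarith) hb.le
    have : j' * N < j + 1 := by exact_mod_cast this
    exact_mod_cast Int.lt_add_one_iff.mp this
  have hup : (j + 1 : ℝ) ≤ (j' + 1) * N := by
    have : (j : ℝ) < (j' + 1) * N := lt_of_mul_lt_mul_right (by linarith) hb.le
    have : j < (j' + 1) * N := by exact_mod_cast this
    exact_mod_cast Int.add_one_le_iff.mpr this
  apply Ioc_subset_Ioc <;> nlinarith

lemma two_zpow_eq_natCast_mul {k k' : ℤ} (h : k ≤ k') :
    (2 : ℝ) ^ k' = ((2 ^ (k' - k).toNat : ℕ) : ℝ) * 2 ^ k := by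
  rw [Nat.cast_pow, Nat.cast_ofNat, ← zpow_natCast, Int.toNat_of_nonneg (sub_nonneg.2 h),
    ← zpow_add₀ two_ne_zero, sub_add_cancel]

namespace DyadicCube

variable {n : ℕ}

lemma sidelength_pos (Q : DyadicCube n) : 0 < Q.sidelength := zpow_pos two_pos _

lemma sidelength_inj {Q Q' : DyadicCube n} : Q.sidelength = Q'.sidelength ↔ Q.k = Q'.k :=
  zpow_right_inj₀ two_pos one_lt_two.ne'

lemma toSet_eq_pi (Q : DyadicCube n) :
    Q.toSet = univ.pi fun i => Ioc ((Q.j i : ℝ) * 2 ^ Q.k) (((Q.j i : ℝ) + 1) * 2 ^ Q.k) := by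
  ext x
  simp [toSet]

lemma lower_lt_upper (Q : DyadicCube n) (i : Fin n) :
    (Q.j i : ℝ) * 2 ^ Q.k < ((Q.j i : ℝ) + 1) * 2 ^ Q.k := by
  linarith [Q.sidelength_pos, show Q.sidelength = 2 ^ Q.k from rfl]

lemma closure_toSet (Q : DyadicCube n) :
    closure Q.toSet =
      univ.pi fun i => Icc ((Q.j i : ℝ) * 2 ^ Q.k) (((Q.j i : ℝ) + 1) * 2 ^ Q.k) := by
  rw [toSet_eq_pi, closure_pi_set]
  exact pi_congr rfl fun i _ => closure_Ioc (Q.lower_lt_upper i).ne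

lemma center_mem_toSet (Q : DyadicCube n) : Q.center ∈ Q.toSet := fun i => by
  have := Q.lower_lt_upper i
  simp only [center]
  constructor <;> linarith

lemma abs_sub_center_le_of_mem_closure {Q : DyadicCube n} {x : Fin n → ℝ}
    (hx : x ∈ closure Q.toSet) (i : Fin n) : |x i - Q.center i| ≤ Q.sidelength / 2 := by
  rw [closure_toSet] at hx
  obtain ⟨h₁, h₂⟩ := hx i (mem_univ i)
  simp only [center, sidelength]
  rw [abs_le]
  constructor <;> linarith

lemma abs_sub_center_le_of_mem {Q : DyadicCube n} {x : Fin n → ℝ} (hx : x ∈ Q.toSet)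
    (i : Fin n) : |x i - Q.center i| ≤ Q.sidelength / 2 :=
  abs_sub_center_le_of_mem_closure (subset_closure hx) i

lemma sidelength_div_two_le_norm_center_sub_of_notMem {Q : DyadicCube n} {x : Fin n → ℝ}
    (hx : x ∉ Q.toSet) : Q.sidelength / 2 ≤ ‖Q.center - x‖ := by
  simp only [toSet_eq_pi, mem_univ_pi, mem_Ioc, not_forall, not_and_or, not_lt, not_le] at hx
  obtain ⟨i, hi⟩ := hx
  refine le_trans ?_ (norm_le_pi_norm (Q.center - x) i)
  rw [Pi.sub_apply, Real.norm_eq_abs, le_abs]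
  simp only [center, sidelength]
  rcases hi with hi | hi
  · left; linarith
  · right; linarith

lemma norm_center_sub_center_le_of_closure_inter {Q Q' : DyadicCube n}
    (h : (closure Q.toSet ∩ closure Q'.toSet).Nonempty) :
    ‖Q.center - Q'.center‖ ≤ (Q.sidelength + Q'.sidelength) / 2 := by
  obtain ⟨z, hz, hz'⟩ := h
  refine (pi_norm_le_iff_of_nonneg (by linarith [Q.sidelength_pos, Q'.sidelength_pos])).2
    fun i => ?_
  have h₁ := abs_sub_center_le_of_mem_closure hz i
  have h₂ := abs_sub_center_le_of_mem_closure hz' i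
  rw [Pi.sub_apply, Real.norm_eq_abs]
  linarith [abs_sub_le (Q.center i) (z i) (Q'.center i), abs_sub_comm (Q.center i) (z i)]

lemma dilate_mono (Q : DyadicCube n) {a b : ℝ} (hab : a ≤ b) : Q.dilate a ⊆ Q.dilate b :=
  fun _ hx i => (hx i).trans (by have := Q.sidelength_pos; gcongr)

lemma toSet_subset_of_k_le {Q Q' : DyadicCube n} (hk : Q.k ≤ Q'.k)
    (h : (Q.toSet ∩ Q'.toSet).Nonempty) : Q.toSet ⊆ Q'.toSet := by
  obtain ⟨x, hx, hx'⟩ := h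
  rw [toSet_eq_pi Q, toSet_eq_pi Q'] at *
  rw [two_zpow_eq_natCast_mul hk] at hx' ⊢
  exact pi_mono fun i _ => Ioc_subset_Ioc_of_inter_nonempty (zpow_pos two_pos Q.k)
    ⟨x i, hx i (mem_univ i), hx' i (mem_univ i)⟩

lemma toSet_subset_toSet_iff {Q Q' : DyadicCube n} :
    Q.toSet ⊆ Q'.toSet ↔ ∀ i, ((Q.j i : ℝ) + 1) * 2 ^ Q.k ≤ ((Q'.j i : ℝ) + 1) * 2 ^ Q'.k ∧
      (Q'.j i : ℝ) * 2 ^ Q'.k ≤ Q.j i * 2 ^ Q.k := by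
  rw [toSet_eq_pi, toSet_eq_pi, univ_pi_subset_univ_pi_iff]
  simp only [Ioc_subset_Ioc_iff (Q.lower_lt_upper _), Ioc_eq_empty_iff, Q.lower_lt_upper,
    not_true_eq_false, exists_false, or_false]

lemma toSet_injective [NeZero n] : Function.Injective (toSet : DyadicCube n → _) := by
  intro Q Q' h
  have h₁ := toSet_subset_toSet_iff.1 h.le
  have h₂ := toSet_subset_toSet_iff.1 h.ge
  have hk : Q.k = Q'.k := by
    rw [← sidelength_inj]
    simp only [sidelength]
    linarith [h₁ 0, h₂ 0]
  obtain ⟨k, j⟩ := Q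
  obtain ⟨k', j'⟩ := Q'
  subst hk
  congr
  funext i
  have : (j i : ℝ) * 2 ^ k = j' i * 2 ^ k := le_antisymm (h₂ i).2 (h₁ i).2
  exact_mod_cast mul_right_cancel₀ (zpow_pos two_pos k).ne' this

lemma mapsTo_j_piFinset (p : Fin n → ℝ) (δ R : ℝ) :
    MapsTo DyadicCube.j {Q : DyadicCube n | Q.sidelength = δ ∧ ‖Q.center - p‖ ≤ R * δ}
      (Fintype.piFinset fun i => Finset.Icc ⌈p i / δ - 1 / 2 - R⌉
        (⌈p i / δ - 1 / 2 - R⌉ + ⌈2 * R⌉₊)) := by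
  rintro Q ⟨rfl, hQ⟩
  refine Fintype.mem_piFinset.2 fun i => mem_Icc_ceil_of_abs_sub_le ?_
  have hδ := Q.sidelength_pos
  have hi : |Q.center i - p i| ≤ R * Q.sidelength := (norm_le_pi_norm (Q.center - p) i).trans hQ
  have : Q.center i - p i = (Q.j i - (p i / Q.sidelength - 1 / 2)) * Q.sidelength := by
    simp only [center, sidelength] at *
    field_simp
    ring
  rwa [this, abs_mul, abs_of_pos hδ, mul_le_mul_iff_left₀ hδ] at hi

lemma injOn_j_of_sidelength_eq (δ : ℝ) :
    InjOn DyadicCube.j {Q : DyadicCube n | Q.sidelength = δ} := by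
  rintro ⟨k, j⟩ hQ ⟨k', j'⟩ hQ' (rfl : j = j')
  have : k = k' := sidelength_inj.1 (hQ.trans hQ'.symm)
  rw [this]

lemma finite_setOf_norm_center_sub_le (p : Fin n → ℝ) (δ R : ℝ) :
    {Q : DyadicCube n | Q.sidelength = δ ∧ ‖Q.center - p‖ ≤ R * δ}.Finite :=
  Finite.of_injOn (mapsTo_j_piFinset p δ R)
    ((injOn_j_of_sidelength_eq δ).mono fun _ hQ => hQ.1) (Finset.finite_toSet _)

lemma ncard_setOf_norm_center_sub_le (p : Fin n → ℝ) (δ R : ℝ) :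
    {Q : DyadicCube n | Q.sidelength = δ ∧ ‖Q.center - p‖ ≤ R * δ}.ncard ≤ (⌈2 * R⌉₊ + 1) ^ n := by
  refine (ncard_le_ncard_of_injOn DyadicCube.j (fun _ hQ => mapsTo_j_piFinset p δ R hQ)
    ((injOn_j_of_sidelength_eq δ).mono fun _ hQ => hQ.1) (Finset.finite_toSet _)).trans ?_
  rw [ncard_coe_finset, Fintype.card_piFinset]
  simp only [Int.card_Icc, add_assoc, add_sub_cancel_left, ← Nat.cast_add_one, Int.toNat_natCast,
    Finset.prod_const, Finset.card_univ, Fintype.card_fin, le_refl]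

end DyadicCube

lemma CZ.eq_of_inter_nonempty {n : ℕ} [NeZero n] {OK : DyadicCube n → Prop}
    {Q Q' : DyadicCube n} (hQ : CZ OK Q) (hQ' : CZ OK Q') (h : (Q.toSet ∩ Q'.toSet).Nonempty) :
    Q = Q' := by
  wlog hk : Q.k ≤ Q'.k generalizing Q Q'
  · exact (this hQ' hQ (inter_comm Q.toSet _ ▸ h) (le_of_not_ge hk)).symm
  by_contra hne
  exact hQ.2.2 Q' hQ'.1
    ((DyadicCube.toSet_subset_of_k_le hk h).ssubset_of_ne (DyadicCube.toSet_injective.ne hne))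
    hQ'.2.1

lemma dist_le_of_le_geometric_of_forall_lt {α : Type*} [PseudoMetricSpace α] {f : ℕ → α}
    {a r : ℝ} (ha : 0 ≤ a) (hr₀ : 0 ≤ r) (hr : r < 1) {m : ℕ}
    (hf : ∀ k < m, dist (f k) (f (k + 1)) ≤ a * r ^ k) : dist (f 0) (f m) ≤ a / (1 - r) :=
  calc dist (f 0) (f m) ≤ ∑ k ∈ Finset.range m, a * r ^ k := dist_le_range_sum_of_dist_le m (hf _)
    _ = a * ∑ k ∈ Finset.Ico 0 m, r ^ k := by rw [Finset.mul_sum, Finset.range_eq_Ico]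
    _ ≤ a * (r ^ 0 / (1 - r)) := by gcongr; exact geom_sum_Ico_le_of_lt_one hr₀ hr
    _ = a / (1 - r) := by ring
lemma exists_lt_of_eq_last {β : Type*} {f : ℕ → β} {m : ℕ∞} {b : β}
    (h : ∃ L : ℕ, 1 ≤ L ∧ m = L ∧ f (L - 1) = b) : ∃ k : ℕ, (k : ℕ∞) < m ∧ f k = b := by
  obtain ⟨L, hL, rfl, hb⟩ := h
  exact ⟨L - 1, by exact_mod_cast Nat.sub_lt hL one_pos, hb⟩

namespace ChainHyp

open DyadicCube

variable {n : ℕ} {OK : DyadicCube n → Prop} {c C : ℝ} {S : DyadicCube n → ℕ → DyadicCube n}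
  {len : DyadicCube n → ℕ∞} {endpt : DyadicCube n → Fin n → ℝ} {Q : DyadicCube n}

lemma zero_lt_len (hch : ChainHyp OK c C S len endpt) (hQ : CZ OK Q) : ((0 : ℕ) : ℕ∞) < len Q := by
  rcases (hch Q hQ).2.2.2.2 with ⟨L, hL, hlen, -⟩ | ⟨hlen, -⟩ <;> rw [hlen]
  · exact_mod_cast hL
  · exact ENat.natCast_lt_top 0

lemma sidelength_le (hch : ChainHyp OK c C S len endpt) (hQ : CZ OK Q) (hc₀ : 0 ≤ c)
    (hc₁ : c ≤ 1) (hC : 0 ≤ C) {k : ℕ} (hk : (k : ℕ∞) < len Q) :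
    (S Q k).sidelength ≤ C * Q.sidelength := by
  obtain ⟨hS₀, -, -, hdecay, -⟩ := hch Q hQ
  calc (S Q k).sidelength ≤ C * c ^ (k - 0) * (S Q 0).sidelength := hdecay 0 k k.zero_le hk
    _ ≤ C * 1 * Q.sidelength := by
      rw [hS₀]; have := Q.sidelength_pos; gcongr; exact pow_le_one₀ hc₀ hc₁
    _ = C * Q.sidelength := by ring

lemma norm_center_sub_center_succ_le (hch : ChainHyp OK c C S len endpt) (hQ : CZ OK Q)
    (hc₀ : 0 ≤ c) (hc₁ : c ≤ 1) (hC : 0 ≤ C) {ℓ r : ℕ} (hr : ((ℓ + r + 1 : ℕ) : ℕ∞) < len Q) :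
    ‖(S Q (ℓ + r)).center - (S Q (ℓ + r + 1)).center‖ ≤ C * (S Q ℓ).sidelength * c ^ r := by
  obtain ⟨-, -, hnb, hdecay, -⟩ := hch Q hQ
  have hr' : ((ℓ + r : ℕ) : ℕ∞) < len Q := lt_of_le_of_lt (by exact_mod_cast (ℓ + r).le_succ) hr
  have h₁ := hdecay ℓ (ℓ + r) (by omega) hr'
  have h₂ := hdecay ℓ (ℓ + r + 1) (by omega) hr
  rw [Nat.add_sub_cancel_left] at h₁
  rw [add_assoc, Nat.add_sub_cancel_left, ← add_assoc] at h₂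
  have hpow : c ^ (r + 1) ≤ c ^ r := pow_le_pow_of_le_one hc₀ hc₁ r.le_succ
  have : C * c ^ (r + 1) * (S Q ℓ).sidelength ≤ C * c ^ r * (S Q ℓ).sidelength := by
    have := (S Q ℓ).sidelength_pos; gcongr
  calc _ ≤ ((S Q (ℓ + r)).sidelength + (S Q (ℓ + r + 1)).sidelength) / 2 :=
        norm_center_sub_center_le_of_closure_inter (hnb (ℓ + r) (by exact_mod_cast hr))
    _ ≤ C * (S Q ℓ).sidelength * c ^ r := by linarith

lemma norm_center_sub_center_le (hch : ChainHyp OK c C S len endpt) (hQ : CZ OK Q)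
    (hc₀ : 0 ≤ c) (hc₁ : c < 1) (hC : 0 ≤ C) {ℓ m : ℕ} (hℓm : ℓ ≤ m) (hm : (m : ℕ∞) < len Q) :
    ‖(S Q ℓ).center - (S Q m).center‖ ≤ C / (1 - c) * (S Q ℓ).sidelength := by
  obtain ⟨d, rfl⟩ := Nat.exists_eq_add_of_le hℓm
  rw [← dist_eq_norm, div_mul_eq_mul_div, mul_comm C]
  refine dist_le_of_le_geometric_of_forall_lt (f := fun r => (S Q (ℓ + r)).center)
    (mul_nonneg (S Q ℓ).sidelength_pos.le hC) hc₀ hc₁ fun r hr => ?_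
  rw [dist_eq_norm, mul_comm _ C]
  exact hch.norm_center_sub_center_succ_le hQ hc₀ hc₁.le hC
    (lt_of_le_of_lt (by exact_mod_cast (by omega : ℓ + r + 1 ≤ ℓ + d)) hm)

lemma norm_center_sub_endpt_le (hch : ChainHyp OK c C S len endpt) (hQ : CZ OK Q)
    (hc₀ : 0 ≤ c) (hc₁ : c < 1) (hC : 0 ≤ C) {k : ℕ} (hk : (k : ℕ∞) < len Q) :
    ‖(S Q k).center - endpt Q‖ ≤ C / (1 - c) * (S Q k).sidelength := by
  rcases (hch Q hQ).2.2.2.2 with ⟨L, hL, hlen, -, hend⟩ | ⟨htop, -, hlim⟩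
  · rw [hend]
    rw [hlen] at hk
    exact hch.norm_center_sub_center_le hQ hc₀ hc₁ hC (Nat.le_sub_one_of_lt (by exact_mod_cast hk))
      (hlen ▸ by exact_mod_cast Nat.sub_lt hL one_pos)
  · exact le_of_tendsto (tendsto_const_nhds.sub hlim).norm <| Filter.eventually_atTop.2
      ⟨k, fun m hm => hch.norm_center_sub_center_le hQ hc₀ hc₁ hC hm (htop ▸ ENat.natCast_lt_top m)⟩

lemma norm_center_sub_endpt_le_self (hch : ChainHyp OK c C S len endpt) (hQ : CZ OK Q)
    (hc₀ : 0 ≤ c) (hc₁ : c < 1) (hC : 0 ≤ C) :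
    ‖Q.center - endpt Q‖ ≤ C / (1 - c) * Q.sidelength := by
  simpa only [(hch Q hQ).1] using
    hch.norm_center_sub_endpt_le hQ hc₀ hc₁ hC (hch.zero_lt_len hQ)

lemma toSet_subset_dilate (hch : ChainHyp OK c C S len endpt) (hQ : CZ OK Q)
    (hc₀ : 0 ≤ c) (hc₁ : c < 1) (hC : 0 ≤ C) {k : ℕ} (hk : (k : ℕ∞) < len Q) :
    (S Q k).toSet ⊆ Q.dilate (C + 2 * (C / (1 - c))) := by
  intro x hx i
  have h₁ := abs_sub_center_le_of_mem hx i
  have h₂ := hch.norm_center_sub_center_le hQ hc₀ hc₁ hC k.zero_le hk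
  rw [(hch Q hQ).1, norm_sub_rev] at h₂
  have h₂' : |(S Q k).center i - Q.center i| ≤ C / (1 - c) * Q.sidelength :=
    (norm_le_pi_norm ((S Q k).center - Q.center) i).trans h₂
  have h₃ := hch.sidelength_le hQ hc₀ hc₁.le hC hk
  show |x i - Q.center i| ≤ (C + 2 * (C / (1 - c))) * Q.sidelength / 2
  linarith [abs_sub_le (x i) ((S Q k).center i) (Q.center i)]

lemma norm_center_sub_center_le_of_eq_last (hch : ChainHyp OK c C S len endpt) (hQ : CZ OK Q)
    (hc₀ : 0 ≤ c) (hc₁ : c < 1) (hC : 0 ≤ C) {Qs : DyadicCube n}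
    (hlast : ∃ L : ℕ, 1 ≤ L ∧ len Q = L ∧ S Q (L - 1) = Qs) :
    ‖Q.center - Qs.center‖ ≤ C / (1 - c) * Q.sidelength := by
  obtain ⟨k, hk, rfl⟩ := exists_lt_of_eq_last hlast
  simpa only [(hch Q hQ).1] using hch.norm_center_sub_center_le hQ hc₀ hc₁ hC k.zero_le hk

lemma setOf_eq_last_subset (hch : ChainHyp OK c C S len endpt) (hc₀ : 0 ≤ c) (hc₁ : c < 1)
    (hC : 0 ≤ C) (Qs : DyadicCube n) (δ : ℝ) :
    {Q : DyadicCube n | CZ OK Q ∧ Q.sidelength = δ ∧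
      ∃ L : ℕ, 1 ≤ L ∧ len Q = (L : ℕ∞) ∧ S Q (L - 1) = Qs} ⊆
      {Q | Q.sidelength = δ ∧ ‖Q.center - Qs.center‖ ≤ C / (1 - c) * δ} :=
  fun _ ⟨hQ, hδ, hlast⟩ => ⟨hδ, hδ ▸ hch.norm_center_sub_center_le_of_eq_last hQ hc₀ hc₁ hC hlast⟩

lemma endpt_notMem_toSet [NeZero n] (hch : ChainHyp OK c C S len endpt) (hQ : CZ OK Q)
    (hne : endpt Q ≠ Q.center) : endpt Q ∉ Q.toSet := by
  obtain ⟨-, hCZ, -, -, hend⟩ := hch Q hQ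
  rcases hend with ⟨L, hL, hlen, -, hend⟩ | ⟨-, hKp, -⟩
  · intro hmem
    have hlast : CZ OK (S Q (L - 1)) := hCZ _ (hlen ▸ by exact_mod_cast Nat.sub_lt hL one_pos)
    rw [hend] at hne hmem
    exact hne (congrArg center (hlast.eq_of_inter_nonempty hQ ⟨_, center_mem_toSet _, hmem⟩))
  · exact fun hmem => hKp.2 (mem_iUnion₂.2 ⟨Q, hQ, hmem⟩)

end ChainHyp

open DyadicCube

/-- **Keystone chain geometry (Lemma `keygeomlem`).**  Let `κ°(i) = endpt Q_i` be the endpoint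
(keystone cube center or keystone point) of the chain of the CZ cube `Q_i`.  Then:
(1) if `κ(i) ≠ i` then `|x_i − κ°(i)| ≃ δ_{Q_i}`;
(2) `|x_i − κ°(i)| ≲ |x_i − x|` for every `x ∈ K_p`;
(3) every cube `Q^{i,j}` of the chain `S(Q_i)` satisfies `Q^{i,j} ⊆ C₁ Q_i` and
    `|x^{i,j} − κ°(i)| ≲ δ_{Q^{i,j}}`;
(4) for a keystone cube `Q_s` and any `i` with `κ(i) = s`: `δ_{Q_i} ≥ c₁ δ_{Q_s}` and
    `Q_s ⊆ C₁ Q_i`; moreover for each fixed sidelength `δ`, the number of such `i` with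
    `δ_{Q_i} = δ` is at most `N`. -/
theorem stmt16 (n : ℕ) (hn : 1 ≤ n) (c C : ℝ) (hc : 0 < c) (hc1 : c < 1) (hC : 1 ≤ C) :
    ∃ c₁ C₁ : ℝ, ∃ N : ℕ, 0 < c₁ ∧ 0 < C₁ ∧
      ∀ OK : DyadicCube n → Prop, OKmono OK →
      ∀ (S : DyadicCube n → ℕ → DyadicCube n) (len : DyadicCube n → ℕ∞)
        (endpt : DyadicCube n → (Fin n → ℝ)),
        ChainHyp OK c C S len endpt →
        (∀ Q : DyadicCube n, CZ OK Q → ∀ x ∈ Kp OK, ∀ y ∈ Q.toSet,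
          Q.sidelength ≤ ‖y - x‖) →
        (∀ Q : DyadicCube n, CZ OK Q → endpt Q ≠ Q.center →
            c₁ * Q.sidelength ≤ ‖Q.center - endpt Q‖ ∧
            ‖Q.center - endpt Q‖ ≤ C₁ * Q.sidelength) ∧
        (∀ Q : DyadicCube n, CZ OK Q → ∀ x ∈ Kp OK,
            ‖Q.center - endpt Q‖ ≤ C₁ * ‖Q.center - x‖) ∧
        (∀ Q : DyadicCube n, CZ OK Q → ∀ k : ℕ, (k : ℕ∞) < len Q →
            (S Q k).toSet ⊆ Q.dilate C₁ ∧
            ‖(S Q k).center - endpt Q‖ ≤ C₁ * (S Q k).sidelength) ∧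
        (∀ Qs : DyadicCube n, Keystone OK Qs → ∀ Q : DyadicCube n, CZ OK Q →
            (∃ L : ℕ, 1 ≤ L ∧ len Q = (L : ℕ∞) ∧ S Q (L - 1) = Qs) →
            c₁ * Qs.sidelength ≤ Q.sidelength ∧ Qs.toSet ⊆ Q.dilate C₁) ∧
        (∀ Qs : DyadicCube n, Keystone OK Qs → ∀ δ : ℝ,
            {Q : DyadicCube n | CZ OK Q ∧ Q.sidelength = δ ∧
              ∃ L : ℕ, 1 ≤ L ∧ len Q = (L : ℕ∞) ∧ S Q (L - 1) = Qs}.Finite ∧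
            {Q : DyadicCube n | CZ OK Q ∧ Q.sidelength = δ ∧
              ∃ L : ℕ, 1 ≤ L ∧ len Q = (L : ℕ∞) ∧ S Q (L - 1) = Qs}.ncard ≤ N) := by
  have hC₀ : 0 ≤ C := zero_le_one.trans hC
  have hA₀ : 0 ≤ C / (1 - c) := div_nonneg hC₀ (by linarith)
  have hCA : C ≤ C / (1 - c) := le_div_self hC₀ (by linarith) (by linarith)
  refine ⟨1 / (2 * C), 3 * (C / (1 - c)), (⌈2 * (C / (1 - c))⌉₊ + 1) ^ n, by positivity,
    mul_pos three_pos (div_pos (by linarith) (by linarith)), ?_⟩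
  intro OK _ S len endpt hch hKp
  have : NeZero n := NeZero.of_pos hn
  have hdilate : ∀ Q, CZ OK Q → ∀ k : ℕ, (k : ℕ∞) < len Q →
      (S Q k).toSet ⊆ Q.dilate (3 * (C / (1 - c))) := fun Q hQ k hk =>
    (hch.toSet_subset_dilate hQ hc.le hc1 hC₀ hk).trans (Q.dilate_mono (by linarith))
  refine ⟨fun Q hQ hne => ⟨?_, ?_⟩, fun Q hQ x hx => ?_,
    fun Q hQ k hk => ⟨hdilate Q hQ k hk, ?_⟩, ?_, fun Qs _ δ => ?_⟩
  · calc 1 / (2 * C) * Q.sidelength ≤ Q.sidelength / 2 := by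
          rw [div_mul_eq_mul_div, one_mul]
          exact div_le_div_of_nonneg_left Q.sidelength_pos.le two_pos (by linarith)
      _ ≤ ‖Q.center - endpt Q‖ :=
          sidelength_div_two_le_norm_center_sub_of_notMem (hch.endpt_notMem_toSet hQ hne)
  · have := Q.sidelength_pos
    exact (hch.norm_center_sub_endpt_le_self hQ hc.le hc1 hC₀).trans (by nlinarith)
  · have := mul_le_mul_of_nonneg_left (hKp Q hQ x hx _ Q.center_mem_toSet) hA₀
    exact (hch.norm_center_sub_endpt_le_self hQ hc.le hc1 hC₀).trans
      (by nlinarith [norm_nonneg (Q.center - x)])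
  · have := (S Q k).sidelength_pos
    exact (hch.norm_center_sub_endpt_le hQ hc.le hc1 hC₀ hk).trans (by nlinarith)
  · rintro Qs - Q hQ hlast
    obtain ⟨k, hk, rfl⟩ := exists_lt_of_eq_last hlast
    have := hch.sidelength_le hQ hc.le hc1.le hC₀ hk
    have := Q.sidelength_pos
    refine ⟨?_, hdilate Q hQ k hk⟩
    calc 1 / (2 * C) * (S Q k).sidelength ≤ 1 / (2 * C) * (C * Q.sidelength) := by gcongr
      _ ≤ Q.sidelength := by field_simp; linarith
  · have hsub := hch.setOf_eq_last_subset hc.le hc1 hC₀ Qs δ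
    have hfin := finite_setOf_norm_center_sub_le Qs.center δ (C / (1 - c))
    exact ⟨hfin.subset hsub,
      (ncard_le_ncard hsub hfin).trans (ncard_setOf_norm_center_sub_le _ _ _)⟩
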